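/- If f(x) = a₀ ⊕ a·x is affine, then in the Grover iteration of Algorithm 3, the component |X⟩ orthogonal to |a⟩ has amplitude 0 in D_f|0⟩^⊗n, and hence after any number t of Grover iterations the measured outcome is a with probability 1. -/

import Mathlib

open Finset

/-- GF(2) inner product of two vectors in {0,1}^n. -/
def bip {n : ℕ} (a x : Fin n → ZMod 2) : ZMod 2 := ∑ i, a i * x i

/-- The character (-1)^b for b ∈ GF(2). -/
noncomputable def chi (b : ZMod 2) : ℝ := if b = 0 then 1 else -1

/-- Walsh transform of a Boolean function. -/
noncomputable def W {n : ℕ} (f : (Fin n → ZMod 2) → ZMod 2) (ω : Fin n → ZMod 2) : ℝ :=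
  ∑ x, chi (f x + bip ω x)

/-- Normalized Walsh transform of a Boolean function. -/
noncomputable def NW {n : ℕ} (f : (Fin n → ZMod 2) → ZMod 2) (ω : Fin n → ZMod 2) : ℝ :=
  (1 / 2 ^ n) * ∑ x, chi (f x + bip ω x)

/-- Hamming distance between two Boolean functions. -/
def hd {n : ℕ} (f g : (Fin n → ZMod 2) → ZMod 2) : ℕ :=
  (univ.filter fun x => f x ≠ g x).card

/-
For affine `f = a₀ + ⟨a, ·⟩` the Walsh spectrum is concentrated at `a`: for `z ≠ a` the sum
`∑ₓ (-1)^(a₀ + ⟨a + z, x⟩)` vanishes because translating `x` along a coordinate where `a + z` is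
nonzero flips every sign. So `D_f|0⟩ = ±|a⟩`, a unit vector fixed by the oracle; then
`(2|ψ⟩⟨ψ| - I) O ψ = 2ψ - ψ = ψ`, and every Grover iterate is `ψ` again.
-/

lemma chi_add_one (b : ZMod 2) : chi (b + 1) = -chi b := by
  obtain rfl | rfl : b = 0 ∨ b = 1 := by decide +revert
  all_goals simp [chi, CharTwo.add_self_eq_zero]

lemma chi_sq (b : ZMod 2) : chi b ^ 2 = 1 := by
  fin_cases b <;> simp [chi]

lemma bip_eq_dotProduct {n : ℕ} (a x : Fin n → ZMod 2) : bip a x = a ⬝ᵥ x := rfl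

lemma sum_chi_add_bip_eq_zero {n : ℕ} {w : Fin n → ZMod 2} (hw : w ≠ 0) (c : ZMod 2) :
    ∑ x, chi (c + bip w x) = 0 := by
  obtain ⟨i, hi⟩ : ∃ i, w i ≠ 0 := Function.ne_iff.mp hw
  have hwi : w i = 1 := (by decide : ∀ b : ZMod 2, b ≠ 0 → b = 1) _ hi
  have hflip (x : Fin n → ZMod 2) :
      chi (c + bip w (x + Pi.single i 1)) = -chi (c + bip w x) := by
    rw [bip_eq_dotProduct, dotProduct_add, dotProduct_single, hwi,
      mul_one, ← add_assoc, chi_add_one, bip_eq_dotProduct]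
  have hshift := Equiv.sum_comp (Equiv.addRight (Pi.single i 1 : Fin n → ZMod 2))
    (fun x => chi (c + bip w x))
  simp only [Equiv.coe_addRight, hflip, Finset.sum_neg_distrib] at hshift
  linarith

lemma NW_of_affine {n : ℕ} {f : (Fin n → ZMod 2) → ZMod 2} {a₀ : ZMod 2} {a : Fin n → ZMod 2}
    (hf : ∀ x, f x = a₀ + bip a x) : NW f = Pi.single a (chi a₀) := by
  have hshift (z x : Fin n → ZMod 2) : f x + bip z x = a₀ + bip (a + z) x := by
    simp only [hf, bip_eq_dotProduct, add_dotProduct, add_assoc]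
  funext z
  simp only [NW, hshift]
  by_cases hz : z = a
  · subst hz
    simp [ZModModule.add_self, bip_eq_dotProduct]
  · have hne : a + z ≠ 0 := by
      rwa [Ne, add_eq_zero_iff_eq_neg', ZModModule.neg_eq_self]
    rw [sum_chi_add_bip_eq_zero hne, Pi.single_eq_of_ne hz, mul_zero]

def phaseOracle {ι R : Type*} [DecidableEq ι] [Neg R] (a : ι) (v : ι → R) : ι → R :=
  fun z => if z = a then v z else -v z

lemma phaseOracle_single {ι R : Type*} [DecidableEq ι] [NegZeroClass R] (a : ι) (c : R) :
    phaseOracle a (Pi.single a c) = Pi.single a c := by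
  funext z
  by_cases hz : z = a <;> simp [phaseOracle, hz]

/-- One Grover step `v ↦ (2|ψ⟩⟨ψ| - I) (O v)`. -/
def groverStep {ι R : Type*} [Fintype ι] [CommRing R] (ψ : ι → R) (O : (ι → R) → ι → R)
    (v : ι → R) : ι → R :=
  fun z => 2 * (ψ ⬝ᵥ O v) * ψ z - O v z

lemma groverStep_iterate_eq_self {ι R : Type*} [Fintype ι] [CommRing R] {ψ : ι → R}
    {O : (ι → R) → ι → R} (hO : O ψ = ψ) (hψ : ψ ⬝ᵥ ψ = 1) (t : ℕ) :
    (groverStep ψ O)^[t] ψ = ψ := by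
  refine Function.iterate_fixed (funext fun z => ?_) t
  simp only [groverStep, hO, hψ]
  ring

/-- For affine f, the Deutsch–Jozsa state has no component orthogonal to |a⟩, and
after any number t of Grover iterations the measured outcome is a with probability 1. -/
theorem grover_affine_fixed (n : ℕ) (f : (Fin n → ZMod 2) → ZMod 2)
    (a₀ : ZMod 2) (a : Fin n → ZMod 2) (hf : ∀ x, f x = a₀ + bip a x) (t : ℕ) :
    ∀ (ψ : (Fin n → ZMod 2) → ℝ), ψ = (fun z => NW f z) →
    ∀ (Og G : ((Fin n → ZMod 2) → ℝ) → ((Fin n → ZMod 2) → ℝ)),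
      Og = (fun v z => if z = a then v z else -v z) →
      G = (fun v z => 2 * (∑ w, ψ w * Og v w) * ψ z - Og v z) →
      (∀ z, z ≠ a → ψ z = 0) ∧
      (∀ z, z ≠ a → (G^[t] ψ) z = 0) ∧ ((G^[t] ψ) a) ^ 2 = 1 := by
  intro ψ hψ Og G hOg hG
  have hψ_single : ψ = Pi.single a (chi a₀) := hψ.trans (NW_of_affine hf)
  have hO : Og ψ = ψ := by
    rw [hOg, hψ_single]
    exact phaseOracle_single a (chi a₀)
  have hunit : ψ ⬝ᵥ ψ = 1 := by
    rw [hψ_single, single_dotProduct, Pi.single_eq_same, ← sq, chi_sq]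
  have hfix : G^[t] ψ = ψ := hG ▸ groverStep_iterate_eq_self hO hunit t
  rw [hfix, hψ_single]
  exact ⟨fun z hz => Pi.single_eq_of_ne hz _, fun z hz => Pi.single_eq_of_ne hz _,
    by rw [Pi.single_eq_same, chi_sq]⟩
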